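/- Let x ∈ gl(n,ℂ) be strongly regular, and let h ∈ GL(n,ℂ) lie in the subgroup G_i (upper left i×i block invertible, identity elsewhere) and centralize x_i. Then y = h x h^{-1} is again strongly regular; more precisely, y_k = x_k for k ≤ i and y_k = h x_k h^{-1} for k > i, and the conditions 'y_k regular in g_k for all k' and 'z_{g_k}(y_k) ∩ z_{g_{k+1}}(y_{k+1}) = 0 for all k' hold. -/

import Mathlib

/-!
Conjugation by `h` is an algebra automorphism of `gl(n,ℂ)` fixing the projection onto the first
`k` coordinates for every `k ≥ i`, so it commutes with taking `k`-cutoffs and carries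
`z_{g_k}(x_k)` isomorphically onto `z_{g_k}(y_k)`. For `k ≤ i` instead `y_k = x_k`, because `h`
centralizes `x_i`. Each consecutive pair `k, k + 1` lies entirely on one side of `i`, so both the
dimensions and the trivial intersections transfer from `x` to `y`.
-/

noncomputable section

open Matrix

/-- The cutoff `x_k`: the upper left `k × k` corner of `x`, viewed in `gl(n,ℂ)`. -/
def cutoff (n k : ℕ) (x : Matrix (Fin n) (Fin n) ℂ) : Matrix (Fin n) (Fin n) ℂ :=
  fun a b => if a.1 < k ∧ b.1 < k then x a b else 0

/-- The subalgebra `g_i ⊂ gl(n,ℂ)` of matrices supported in the upper left `i × i` block. -/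
def corner (n i : ℕ) : Submodule ℂ (Matrix (Fin n) (Fin n) ℂ) where
  carrier := {x | ∀ a b : Fin n, ¬(a.1 < i ∧ b.1 < i) → x a b = 0}
  add_mem' := by
    intro x y hx hy a b h
    simp [Matrix.add_apply, hx a b h, hy a b h]
  zero_mem' := by intro a b h; rfl
  smul_mem' := by
    intro c x hx a b h
    simp [Matrix.smul_apply, hx a b h]

/-- The centralizer of `y` in `gl(n,ℂ)`, as a subspace. -/
def matCentralizer (n : ℕ) (y : Matrix (Fin n) (Fin n) ℂ) :
    Submodule ℂ (Matrix (Fin n) (Fin n) ℂ) :=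
  LinearMap.ker (LinearMap.mulLeft ℂ y - LinearMap.mulRight ℂ y)

/-- `z_{g_i}(x_i)`: the centralizer of `x_i` inside `g_i`, viewed in `gl(n,ℂ)`. -/
def cornerCent (n i : ℕ) (x : Matrix (Fin n) (Fin n) ℂ) :
    Submodule ℂ (Matrix (Fin n) (Fin n) ℂ) :=
  corner n i ⊓ matCentralizer n (cutoff n i x)

/-- Membership in `G_i ⊂ GL(n,ℂ)`: agrees with the identity matrix outside the
upper left `i × i` block. -/
def inGL (n i : ℕ) (g : Matrix (Fin n) (Fin n) ℂ) : Prop :=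
  ∀ a b : Fin n, ¬(a.1 < i ∧ b.1 < i) → g a b = (1 : Matrix (Fin n) (Fin n) ℂ) a b

/-- Strong regularity, via the Kostant–Wallach characterization: each cutoff `x_i`
is regular in `g_i` and consecutive centralizers intersect trivially. -/
def StronglyRegularChar (n : ℕ) (x : Matrix (Fin n) (Fin n) ℂ) : Prop :=
  (∀ i, 1 ≤ i → i ≤ n → Module.finrank ℂ (cornerCent n i x) = i) ∧
  (∀ i, 1 ≤ i → i ≤ n - 1 → cornerCent n i x ⊓ cornerCent n (i + 1) x = ⊥)

def cornerProj (n k : ℕ) : Matrix (Fin n) (Fin n) ℂ :=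
  diagonal fun a => if a.1 < k then 1 else 0

section

variable {n : ℕ}

lemma cutoff_eq_cornerProj_mul_mul (k : ℕ) (m : Matrix (Fin n) (Fin n) ℂ) :
    cutoff n k m = cornerProj n k * m * cornerProj n k := by
  ext a b
  by_cases ha : a.1 < k <;> by_cases hb : b.1 < k <;>
    simp [cutoff, cornerProj, mul_diagonal, diagonal_mul, ha, hb]

lemma cutoff_cutoff_of_le {k l : ℕ} (hkl : k ≤ l) (m : Matrix (Fin n) (Fin n) ℂ) :
    cutoff n k (cutoff n l m) = cutoff n k m := by
  ext a b
  by_cases hab : a.1 < k ∧ b.1 < k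
  · simp [cutoff, hab, hab.1.trans_le hkl, hab.2.trans_le hkl]
  · simp [cutoff, hab]

lemma mem_corner_iff_cutoff_eq {k : ℕ} {z : Matrix (Fin n) (Fin n) ℂ} :
    z ∈ corner n k ↔ cutoff n k z = z := by
  refine ⟨fun hz => ?_, fun hz a b hab => by rw [← hz]; simp [cutoff, hab]⟩
  ext a b
  by_cases hab : a.1 < k ∧ b.1 < k
  · simp [cutoff, hab]
  · simp [cutoff, hab, hz a b hab]

lemma mem_matCentralizer_iff {m z : Matrix (Fin n) (Fin n) ℂ} :
    z ∈ matCentralizer n m ↔ m * z = z * m := by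
  simp [matCentralizer, sub_eq_zero]

lemma commute_cornerProj_of_inGL {i k : ℕ} (hik : i ≤ k) {g : Matrix (Fin n) (Fin n) ℂ}
    (hg : inGL n i g) : Commute g (cornerProj n k) := by
  ext a b
  simp only [cornerProj, mul_diagonal, diagonal_mul]
  by_cases ha : a.1 < k <;> by_cases hb : b.1 < k
  all_goals try simp [ha, hb]
  -- exactly one of `a`, `b` is `≥ k ≥ i`, so `g a b = 1 a b = 0`
  all_goals
    rw [hg a b (by omega), one_apply_ne (by rintro rfl; exact absurd ha (by omega))]

end

section AlgEquiv

variable {n : ℕ} (e : Matrix (Fin n) (Fin n) ℂ ≃ₐ[ℂ] Matrix (Fin n) (Fin n) ℂ)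

lemma map_matCentralizer (m : Matrix (Fin n) (Fin n) ℂ) :
    (matCentralizer n m).map e.toLinearMap = matCentralizer n (e m) := by
  ext z
  change z ∈ (matCentralizer n m).map (e.toLinearEquiv : _ →ₗ[ℂ] _) ↔ _
  rw [Submodule.mem_map_equiv, mem_matCentralizer_iff, mem_matCentralizer_iff,
    ← e.injective.eq_iff, map_mul, map_mul]
  simp

variable {k : ℕ}

lemma cutoff_map (he : e (cornerProj n k) = cornerProj n k)
    (m : Matrix (Fin n) (Fin n) ℂ) :
    cutoff n k (e m) = e (cutoff n k m) := by
  simp only [cutoff_eq_cornerProj_mul_mul, map_mul, he]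

lemma map_corner (he : e (cornerProj n k) = cornerProj n k) :
    (corner n k).map e.toLinearMap = corner n k := by
  ext z
  change z ∈ (corner n k).map (e.toLinearEquiv : _ →ₗ[ℂ] _) ↔ _
  rw [Submodule.mem_map_equiv, mem_corner_iff_cutoff_eq, mem_corner_iff_cutoff_eq,
    ← e.injective.eq_iff, ← cutoff_map e he]
  simp

lemma map_cornerCent (he : e (cornerProj n k) = cornerProj n k)
    (x : Matrix (Fin n) (Fin n) ℂ) :
    (cornerCent n k x).map e.toLinearMap = cornerCent n k (e x) := by
  rw [cornerCent, cornerCent, Submodule.map_inf _ e.injective, map_corner e he,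
    map_matCentralizer, cutoff_map e he]

end AlgEquiv

lemma StronglyRegularChar.of_cornerCent_eq_of_le_of_map_of_ge {n : ℕ}
    {x y : Matrix (Fin n) (Fin n) ℂ} (hx : StronglyRegularChar n x)
    (e : Matrix (Fin n) (Fin n) ℂ ≃ₗ[ℂ] Matrix (Fin n) (Fin n) ℂ) (i : ℕ)
    (hle : ∀ k, k ≤ i → cornerCent n k y = cornerCent n k x)
    (hge : ∀ k, i ≤ k → cornerCent n k y = (cornerCent n k x).map (e : _ →ₗ[ℂ] _)) :
    StronglyRegularChar n y := by
  refine ⟨fun k hk1 hkn => ?_, fun k hk1 hkn => ?_⟩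
  · rcases le_total k i with hki | hik
    · rw [hle k hki]
      exact hx.1 k hk1 hkn
    · rw [hge k hik, LinearEquiv.finrank_map_eq]
      exact hx.1 k hk1 hkn
  · rcases Nat.lt_or_ge k i with hki | hik
    · rw [hle k hki.le, hle (k + 1) hki]
      exact hx.2 k hk1 hkn
    · rw [hge k hik, hge (k + 1) (by omega), ← Submodule.map_inf _ e.injective,
        hx.2 k hk1 hkn, Submodule.map_bot]

theorem stmt6_general (n i : ℕ)
    (x : Matrix (Fin n) (Fin n) ℂ) (hx : StronglyRegularChar n x)
    (h : (Matrix (Fin n) (Fin n) ℂ)ˣ)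
    (hmem : inGL n i (h : Matrix (Fin n) (Fin n) ℂ))
    (hcent : (h : Matrix (Fin n) (Fin n) ℂ) * cutoff n i x =
      cutoff n i x * (h : Matrix (Fin n) (Fin n) ℂ)) :
    ∀ y : Matrix (Fin n) (Fin n) ℂ,
      y = (h : Matrix (Fin n) (Fin n) ℂ) * x * (↑h⁻¹ : Matrix (Fin n) (Fin n) ℂ) →
      (∀ k, k ≤ i → cutoff n k y = cutoff n k x) ∧
      (∀ k, i < k → k ≤ n → cutoff n k y =
        (h : Matrix (Fin n) (Fin n) ℂ) * cutoff n k x * (↑h⁻¹ : Matrix (Fin n) (Fin n) ℂ)) ∧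
      StronglyRegularChar n y := by
  intro y hy
  set σ := MulSemiringAction.toAlgEquiv ℂ (Matrix (Fin n) (Fin n) ℂ) (ConjAct.toConjAct h)
  have hσ (z : Matrix (Fin n) (Fin n) ℂ) :
      σ z = h * z * (↑h⁻¹ : Matrix (Fin n) (Fin n) ℂ) := rfl
  have hσ_cornerProj (k : ℕ) (hik : i ≤ k) : σ (cornerProj n k) = cornerProj n k := by
    rw [hσ, (commute_cornerProj_of_inGL hik hmem).eq, Units.mul_inv_cancel_right]
  have hge (k : ℕ) (hik : i ≤ k) :
      cutoff n k y = h * cutoff n k x * (↑h⁻¹ : Matrix (Fin n) (Fin n) ℂ) := by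
    rw [hy, ← hσ, ← hσ, cutoff_map σ (hσ_cornerProj k hik)]
  have hle (k : ℕ) (hki : k ≤ i) : cutoff n k y = cutoff n k x := by
    rw [← cutoff_cutoff_of_le hki, hge i le_rfl, hcent, Units.mul_inv_cancel_right,
      cutoff_cutoff_of_le hki]
  refine ⟨hle, fun k hik _ => hge k hik.le,
    hx.of_cornerCent_eq_of_le_of_map_of_ge σ.toLinearEquiv i
      (fun k hki => by rw [cornerCent, cornerCent, hle k hki]) fun k hik => ?_⟩
  rw [hy, ← hσ]
  exact (map_cornerCent σ (hσ_cornerProj k hik) x).symm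

/-- Conjugating a strongly regular `x` by `h ∈ G_i` centralizing `x_i` yields a
strongly regular element `y = h x h⁻¹`, with `y_k = x_k` for `k ≤ i` and
`y_k = h x_k h⁻¹` for `k > i`. -/
theorem stmt6 (n i : ℕ) (h1 : 1 ≤ i) (hi : i ≤ n)
    (x : Matrix (Fin n) (Fin n) ℂ) (hx : StronglyRegularChar n x)
    (h : (Matrix (Fin n) (Fin n) ℂ)ˣ)
    (hmem : inGL n i (h : Matrix (Fin n) (Fin n) ℂ))
    (hcent : (h : Matrix (Fin n) (Fin n) ℂ) * cutoff n i x =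
      cutoff n i x * (h : Matrix (Fin n) (Fin n) ℂ)) :
    ∀ y : Matrix (Fin n) (Fin n) ℂ,
      y = (h : Matrix (Fin n) (Fin n) ℂ) * x * (↑h⁻¹ : Matrix (Fin n) (Fin n) ℂ) →
      (∀ k, k ≤ i → cutoff n k y = cutoff n k x) ∧
      (∀ k, i < k → k ≤ n → cutoff n k y =
        (h : Matrix (Fin n) (Fin n) ℂ) * cutoff n k x * (↑h⁻¹ : Matrix (Fin n) (Fin n) ℂ)) ∧
      StronglyRegularChar n y :=
  stmt6_general n i x hx h hmem hcent
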